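/- arXiv:2603.24405 — 10 statements merged into one kernel-verified Lean document; each statement's English description precedes it below -/
import Mathlib

section
/- If f is a polynomial with complex coefficients such that |f(z)| = 1 for all z on the unit circle, then f is a monomial, i.e., f(X) = c·X^k for some complex constant c with |c| = 1 and some nonnegative integer k. -/
/-!
On the unit circle `conj z = z⁻¹`, so the conjugate-reversed polynomial
`g(z) = z ^ n * conj (f (conj z)⁻¹)`, with `n = natDegree f`, satisfies `f(z) g(z) = z ^ n |f(z)|² = z ^ n`
there. The circle is infinite, hence `f * g = X ^ n` as polynomials, and since `X` is prime every
divisor of `X ^ n` is a unit times a power of `X`. Evaluating at `1` shows that unit has modulus one.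
-/

open Polynomial ComplexConjugate

theorem Complex.infinite_sphere_zero_one : (Metric.sphere (0 : ℂ) 1).Infinite :=
  (isConnected_sphere (by simp [Complex.rank_real_complex]) 0 zero_le_one).isPreconnected
    |>.infinite_of_nontrivial ⟨1, by simp, -1, by simp, by norm_num⟩

theorem Polynomial.eval_reverse {K : Type*} [Field K] (f : K[X]) {z : K} (hz : z ≠ 0) :
    f.reverse.eval z = z ^ f.natDegree * f.eval z⁻¹ := by
  let _ := invertibleOfNonzero (inv_ne_zero hz)
  have h := eval₂_reverse_mul_pow (RingHom.id K) z⁻¹ f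
  simp only [eval₂_id, invOf_eq_inv, inv_inv, inv_pow] at h
  rw [← h]
  field_simp

theorem Polynomial.exists_eq_C_mul_X_pow_of_dvd_X_pow {R : Type*} [CommRing R] [IsDomain R]
    {f : R[X]} {n : ℕ} (h : f ∣ X ^ n) : ∃ (c : R) (k : ℕ), IsUnit c ∧ f = C c * X ^ k := by
  obtain ⟨k, -, hk⟩ := (dvd_prime_pow prime_X n).mp h
  obtain ⟨u, hu⟩ := hk.symm
  obtain ⟨c, hc, hCc⟩ := Polynomial.isUnit_iff.mp u.isUnit
  exact ⟨c, k, hc, by rw [← hu, hCc, mul_comm]⟩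

theorem Polynomial.mul_map_conj_reverse_eq_X_pow {f : ℂ[X]}
    (hf : ∀ z : ℂ, ‖z‖ = 1 → ‖f.eval z‖ = 1) :
    f * f.reverse.map (starRingEnd ℂ) = X ^ f.natDegree := by
  rw [← sub_eq_zero]
  refine eq_zero_of_infinite_isRoot _ (Complex.infinite_sphere_zero_one.mono fun z hz => ?_)
  rw [mem_sphere_zero_iff_norm] at hz
  have hz0 : z ≠ 0 := norm_ne_zero_iff.mp (hz ▸ one_ne_zero)
  have hconj : (conj z)⁻¹ = z := by
    rw [Complex.inv_def, Complex.conj_conj, Complex.normSq_eq_norm_sq, Complex.norm_conj, hz]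
    simp
  have hfz : f.eval z * conj (f.eval z) = 1 := by
    rw [Complex.mul_conj, Complex.normSq_eq_norm_sq, hf z hz]; simp
  simp only [Set.mem_ofPred_eq, IsRoot, eval_sub, eval_mul, eval_pow, eval_X]
  rw [eval_map, ← Complex.conj_conj z, eval₂_at_apply, eval_reverse f (by simpa using hz0),
    hconj, map_mul, map_pow, Complex.conj_conj]
  linear_combination z ^ f.natDegree * hfz

theorem stmt_0 (f : Polynomial ℂ)
    (hf : ∀ z : ℂ, ‖z‖ = 1 → ‖f.eval z‖ = 1) :
    ∃ (c : ℂ) (k : ℕ), ‖c‖ = 1 ∧ f = Polynomial.C c * Polynomial.X ^ k := by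
  obtain ⟨c, k, -, rfl⟩ :=
    exists_eq_C_mul_X_pow_of_dvd_X_pow ⟨_, (mul_map_conj_reverse_eq_X_pow hf).symm⟩
  refine ⟨c, k, ?_, rfl⟩
  simpa using hf 1 norm_one
end

section
/- Eneström–Kakeya theorem: Let p(X) = a_n X^n + … + a_1 X + a_0 be a polynomial with real coefficients satisfying a_0 ≥ a_1 ≥ … ≥ a_n > 0. Then every complex zero z of p satisfies r ≤ |z| ≤ R, where r = min{a_ν/a_{ν+1} : 0 ≤ ν < n} and R = max{a_ν/a_{ν+1} : 0 ≤ ν < n}. -/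
/-!
Multiplying by `w - 1` turns `∑ c_ν w^ν = 0` into
`c_n w^(n+1) = c_0 + ∑ (c_(ν+1) - c_ν) w^(ν+1)`. When `0 < c_0 ≤ … ≤ c_n` the right-hand
side has nonnegative coefficients summing to `c_n`, so for `|w| > 1` its modulus is at most
`c_n |w|^n < c_n |w|^(n+1)`; hence `|w| ≤ 1`. Dually, a positive nonincreasing `c` forces
`|w| ≥ 1`. Substituting `z = R w` makes `a_ν R^ν` nondecreasing when every ratio
`a_ν / a_(ν+1)` is at most `R`, and `z = r w` makes `a_ν r^ν` nonincreasing when every ratio is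
at least `r`.
-/

open Finset

theorem mul_sub_one_sum_range_mul_pow {R : Type*} [CommRing R] (c : ℕ → R) (w : R) (n : ℕ) :
    (w - 1) * ∑ ν ∈ range (n + 1), c ν * w ^ ν =
      c n * w ^ (n + 1) - c 0 - ∑ ν ∈ range n, (c (ν + 1) - c ν) * w ^ (ν + 1) := by
  induction n with
  | zero => simp; ring
  | succ m ih =>
    rw [sum_range_succ, sum_range_succ (fun ν => (c (ν + 1) - c ν) * w ^ (ν + 1)), mul_add, ih]
    ring

theorem norm_sum_ofReal_mul_pow_le {ι : Type*} (s : Finset ι) (d : ι → ℝ) (e : ι → ℕ)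
    (hd : ∀ i ∈ s, 0 ≤ d i) (w : ℂ) :
    ‖∑ i ∈ s, (d i : ℂ) * w ^ e i‖ ≤ ∑ i ∈ s, d i * ‖w‖ ^ e i := by
  refine (norm_sum_le _ _).trans (sum_le_sum fun i hi => ?_)
  rw [norm_mul, norm_pow, Complex.norm_real, Real.norm_of_nonneg (hd i hi)]

theorem norm_le_one_of_sum_eq_zero_of_monotone {n : ℕ} {c : ℕ → ℝ} (hc : 0 < c 0)
    (hmono : ∀ ν < n, c ν ≤ c (ν + 1)) {w : ℂ}
    (hw : ∑ ν ∈ range (n + 1), (c ν : ℂ) * w ^ ν = 0) : ‖w‖ ≤ 1 := by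
  by_contra! hw1
  have hd : ∀ ν ∈ range n, 0 ≤ c (ν + 1) - c ν :=
    fun ν hν => sub_nonneg.2 (hmono ν (mem_range.1 hν))
  have hcn : 0 < c n := by linarith [sum_range_sub c n, sum_nonneg hd]
  have hlead : (c n : ℂ) * w ^ (n + 1) =
      c 0 + ∑ ν ∈ range n, ((c (ν + 1) - c ν : ℝ) : ℂ) * w ^ (ν + 1) := by
    push_cast
    linear_combination
      (mul_sub_one_sum_range_mul_pow (fun ν => (c ν : ℂ)) w n).symm + (w - 1) * hw
  have hpow : 1 ≤ ‖w‖ ^ n := one_le_pow₀ hw1.le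
  have hle : c n * ‖w‖ ^ (n + 1) ≤ c n * ‖w‖ ^ n :=
    calc c n * ‖w‖ ^ (n + 1) = ‖(c n : ℂ) * w ^ (n + 1)‖ := by
          rw [norm_mul, norm_pow, Complex.norm_real, Real.norm_of_nonneg hcn.le]
      _ ≤ c 0 + ∑ ν ∈ range n, (c (ν + 1) - c ν) * ‖w‖ ^ (ν + 1) := by
          rw [hlead]
          refine (norm_add_le _ _).trans (add_le_add (by simp [abs_of_pos hc]) ?_)
          exact norm_sum_ofReal_mul_pow_le _ _ _ hd w
      _ ≤ c 0 * ‖w‖ ^ n + ∑ ν ∈ range n, (c (ν + 1) - c ν) * ‖w‖ ^ n := by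
          gcongr with ν hν
          · exact le_mul_of_one_le_right hc.le hpow
          · exact hd ν hν
          · exact hw1.le
          · exact mem_range.1 hν
      _ = c n * ‖w‖ ^ n := by rw [← sum_mul, sum_range_sub]; ring
  exact (mul_lt_mul_of_pos_left (pow_lt_pow_right₀ hw1 n.lt_add_one) hcn).not_ge hle

theorem one_le_norm_of_sum_eq_zero_of_antitone {n : ℕ} {c : ℕ → ℝ} (hc : 0 < c n)
    (hanti : ∀ ν < n, c (ν + 1) ≤ c ν) {w : ℂ}
    (hw : ∑ ν ∈ range (n + 1), (c ν : ℂ) * w ^ ν = 0) : 1 ≤ ‖w‖ := by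
  by_contra! hw1
  have hd : ∀ ν ∈ range n, 0 ≤ c ν - c (ν + 1) :=
    fun ν hν => sub_nonneg.2 (hanti ν (mem_range.1 hν))
  have hc0 : 0 < c 0 := by linarith [sum_range_sub' c n, sum_nonneg hd]
  have hconst : (c 0 : ℂ) =
      c n * w ^ (n + 1) + ∑ ν ∈ range n, ((c ν - c (ν + 1) : ℝ) : ℂ) * w ^ (ν + 1) := by
    simp only [Complex.ofReal_sub, ← neg_sub (c (_ + 1) : ℂ), neg_mul, sum_neg_distrib]
    linear_combination
      (mul_sub_one_sum_range_mul_pow (fun ν => (c ν : ℂ)) w n) - (w - 1) * hw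
  have hpow : ∀ k ≠ 0, ‖w‖ ^ k ≤ ‖w‖ :=
    fun k hk => pow_le_of_le_one (norm_nonneg w) hw1.le hk
  have hle : c 0 ≤ c 0 * ‖w‖ :=
    calc c 0 = ‖(c 0 : ℂ)‖ := by simp [abs_of_pos hc0]
      _ ≤ c n * ‖w‖ ^ (n + 1) +
            ∑ ν ∈ range n, (c ν - c (ν + 1)) * ‖w‖ ^ (ν + 1) := by
          rw [hconst]
          refine (norm_add_le _ _).trans (add_le_add (by simp [abs_of_pos hc]) ?_)
          exact norm_sum_ofReal_mul_pow_le _ _ _ hd w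
      _ ≤ c n * ‖w‖ + ∑ ν ∈ range n, (c ν - c (ν + 1)) * ‖w‖ := by
          gcongr with ν hν
          · exact hpow _ n.succ_ne_zero
          · exact hd ν hν
          · exact hpow _ ν.succ_ne_zero
      _ = c 0 * ‖w‖ := by rw [← sum_mul, sum_range_sub']; ring
  exact (mul_lt_of_lt_one_right hc0 hw1).not_ge hle

theorem sum_range_mul_pow_mul_div_pow {K : Type*} [Field K] (c : ℕ → K) {s : K} (hs : s ≠ 0)
    (w : K) (n : ℕ) :
    ∑ ν ∈ range n, c ν * s ^ ν * (w / s) ^ ν = ∑ ν ∈ range n, c ν * w ^ ν := by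
  refine sum_congr rfl fun ν _ => ?_
  rw [div_pow, mul_assoc, mul_div_cancel₀ _ (pow_ne_zero ν hs)]

theorem le_norm_of_sum_eq_zero_of_mul_le {n : ℕ} {a : ℕ → ℝ} {r : ℝ} (hr : 0 < r)
    (ha : 0 < a n) (hratio : ∀ ν < n, r * a (ν + 1) ≤ a ν) {z : ℂ}
    (hz : ∑ ν ∈ range (n + 1), (a ν : ℂ) * z ^ ν = 0) : r ≤ ‖z‖ := by
  have key := one_le_norm_of_sum_eq_zero_of_antitone (n := n) (c := fun ν => a ν * r ^ ν)
    (w := z / r) (mul_pos ha (pow_pos hr n)) (fun ν hν => ?_) ?_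
  · rwa [norm_div, Complex.norm_real, Real.norm_of_nonneg hr.le, one_le_div hr] at key
  · calc a (ν + 1) * r ^ (ν + 1) = r * a (ν + 1) * r ^ ν := by ring
      _ ≤ a ν * r ^ ν := by gcongr; exact hratio ν hν
  · push_cast
    rwa [sum_range_mul_pow_mul_div_pow _ (Complex.ofReal_ne_zero.2 hr.ne')]

theorem norm_le_of_sum_eq_zero_of_le_mul {n : ℕ} {a : ℕ → ℝ} {R : ℝ} (hR : 0 < R)
    (ha : 0 < a 0) (hratio : ∀ ν < n, a ν ≤ R * a (ν + 1)) {z : ℂ}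
    (hz : ∑ ν ∈ range (n + 1), (a ν : ℂ) * z ^ ν = 0) : ‖z‖ ≤ R := by
  have key := norm_le_one_of_sum_eq_zero_of_monotone (n := n) (c := fun ν => a ν * R ^ ν)
    (w := z / R) (by simpa using ha) (fun ν hν => ?_) ?_
  · rwa [norm_div, Complex.norm_real, Real.norm_of_nonneg hR.le, div_le_one hR] at key
  · calc a ν * R ^ ν ≤ R * a (ν + 1) * R ^ ν := by gcongr; exact hratio ν hν
      _ = a (ν + 1) * R ^ (ν + 1) := by ring
  · push_cast
    rwa [sum_range_mul_pow_mul_div_pow _ (Complex.ofReal_ne_zero.2 hR.ne')]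

theorem stmt_3 (n : ℕ) (hn : 1 ≤ n) (a : ℕ → ℝ)
    (hpos : 0 < a n) (hdec : ∀ ν < n, a (ν + 1) ≤ a ν)
    (z : ℂ)
    (hz : Polynomial.eval z
      (∑ ν ∈ Finset.range (n + 1), Polynomial.C ((a ν : ℂ)) * Polynomial.X ^ ν) = 0) :
    (Finset.range n).inf' (Finset.nonempty_range_iff.mpr (by omega))
        (fun ν => a ν / a (ν + 1)) ≤ ‖z‖ ∧
    ‖z‖ ≤ (Finset.range n).sup' (Finset.nonempty_range_iff.mpr (by omega))
        (fun ν => a ν / a (ν + 1)) := by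
  have hroot : ∑ ν ∈ range (n + 1), (a ν : ℂ) * z ^ ν = 0 := by
    simpa [Polynomial.eval_finsetSum] using hz
  have hanti : AntitoneOn a (Set.Iic n) :=
    antitoneOn_of_succ_le Set.ordConnected_Iic fun ν _ _ hν => hdec ν (Order.succ_le_iff.1 hν)
  have ha : ∀ ν ≤ n, 0 < a ν :=
    fun ν hν => hpos.trans_le (hanti hν (Set.mem_Iic.2 le_rfl) hν)
  have ha₀ : 0 < a 0 := ha 0 n.zero_le
  have hsucc : ∀ ν ∈ range n, 0 < a (ν + 1) := fun ν hν => ha _ (mem_range.1 hν)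
  have h₀ : 0 ∈ range n := mem_range.2 hn
  constructor
  · refine le_norm_of_sum_eq_zero_of_mul_le ?_ hpos (fun ν hν => ?_) hroot
    · exact (lt_inf'_iff _).2 fun ν hν => div_pos (ha ν (mem_range.1 hν).le) (hsucc ν hν)
    · exact (le_div_iff₀ (hsucc ν (mem_range.2 hν))).1 (inf'_le _ (mem_range.2 hν))
  · refine norm_le_of_sum_eq_zero_of_le_mul ?_ ha₀ (fun ν hν => ?_) hroot
    · exact (div_pos ha₀ (hsucc 0 h₀)).trans_le (le_sup' (fun ν => a ν / a (ν + 1)) h₀)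
    · exact (div_le_iff₀ (hsucc ν (mem_range.2 hν))).1
        (le_sup' (fun ν => a ν / a (ν + 1)) (mem_range.2 hν))
end

section
/- Every zero z ∈ ℂ of the polynomial P_n(X) = ∑_{ν=0}^n binom(-1/2,ν)(-X)^ν satisfies |z| ≥ 1 + 1/(2n+1). -/
/-- The generalized binomial coefficient `binom (-1/2) ν`. -/
noncomputable def binomHalf (ν : ℕ) : ℂ :=
  ∏ κ ∈ Finset.range ν, ((-1/2 : ℂ) - κ) / ((ν : ℂ) - κ)

/-!
Up to the signs, `P_n(z) = ∑ a_ν z^ν` with `a_ν = |binom(-1/2,ν)| > 0` and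
`a_ν / a_{ν+1} = (2ν+2)/(2ν+1) ≥ 1 + 1/(2n+1)` for `ν < n`. The lower half of the
Eneström–Kakeya theorem then applies: if `m a_{ν+1} ≤ a_ν` for all `ν < n`, then
`(z - m) P(z) + m a_0 = ∑_{ν<n} (a_ν - m a_{ν+1}) z^{ν+1} + a_n z^{n+1}` has nonnegative
coefficients, so at a root `z` with `|z| < m` the triangle inequality gives `m a_0 < m a_0`,
the right-hand side at `z = m` being `m a_0`.
-/

open Finset

noncomputable def absBinomHalf (ν : ℕ) : ℝ :=
  (∏ κ ∈ range ν, ((1 / 2 : ℝ) + κ)) / ν.factorial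

lemma absBinomHalf_pos (ν : ℕ) : 0 < absBinomHalf ν := by
  unfold absBinomHalf
  have : 0 < ∏ κ ∈ range ν, ((1 / 2 : ℝ) + κ) := prod_pos fun κ _ => by positivity
  positivity

lemma absBinomHalf_succ_mul (ν : ℕ) :
    absBinomHalf (ν + 1) * (2 * ν + 2) = absBinomHalf ν * (2 * ν + 1) := by
  unfold absBinomHalf
  rw [prod_range_succ, Nat.factorial_succ]
  push_cast
  field_simp
  ring

lemma prod_range_natCast_sub_eq_factorial {R : Type*} [CommRing R] (n : ℕ) :
    ∏ κ ∈ range n, ((n : R) - κ) = n.factorial := by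
  rw [← Nat.descFactorial_self, Nat.descFactorial_eq_prod_range, Nat.cast_prod]
  exact prod_congr rfl fun κ hκ => by rw [Nat.cast_sub (mem_range.1 hκ).le]

lemma binomHalf_eq_neg_one_pow_mul (ν : ℕ) :
    binomHalf ν = (-1) ^ ν * (absBinomHalf ν : ℂ) := by
  have hnum : ∀ κ ∈ range ν, ((-1 / 2 : ℂ) - κ) = -1 * ((1 / 2 : ℂ) + κ) :=
    fun κ _ => by ring
  unfold binomHalf absBinomHalf
  rw [prod_div_distrib, prod_range_natCast_sub_eq_factorial, prod_congr rfl hnum,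
    prod_mul_distrib, prod_const, card_range]
  push_cast
  ring

lemma eval_sum_C_binomHalf_mul_neg_X_pow (n : ℕ) (z : ℂ) :
    Polynomial.eval z
        (∑ ν ∈ range (n + 1), Polynomial.C (binomHalf ν) * (-Polynomial.X) ^ ν) =
      ∑ ν ∈ range (n + 1), (absBinomHalf ν : ℂ) * z ^ ν := by
  rw [Polynomial.eval_finsetSum]
  refine sum_congr rfl fun ν _ => ?_
  simp only [Polynomial.eval_mul, Polynomial.eval_C, Polynomial.eval_pow,
    Polynomial.eval_neg, Polynomial.eval_X, binomHalf_eq_neg_one_pow_mul, neg_pow z]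
  rw [mul_mul_mul_comm, ← mul_pow, neg_one_mul, neg_neg, one_pow, one_mul]

lemma sub_mul_sum_range_add_mul_eq {R : Type*} [CommRing R] (a : ℕ → R) (m z : R) (n : ℕ) :
    (z - m) * ∑ ν ∈ range (n + 1), a ν * z ^ ν + m * a 0 =
      ∑ ν ∈ range n, (a ν - m * a (ν + 1)) * z ^ (ν + 1) + a n * z ^ (n + 1) := by
  induction n with
  | zero => rw [sum_range_one, sum_range_zero]; ring
  | succ n ih =>
    rw [sum_range_succ (fun ν => a ν * z ^ ν) (n + 1),
      sum_range_succ (fun ν => (a ν - m * a (ν + 1)) * z ^ (ν + 1)) n]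
    linear_combination ih

/-- Lower half of the Eneström–Kakeya theorem. -/
theorem le_norm_of_sum_mul_pow_eq_zero {a : ℕ → ℝ} {m : ℝ} {n : ℕ} (ha : 0 < a n)
    (hdec : ∀ ν < n, m * a (ν + 1) ≤ a ν) {z : ℂ}
    (hz : ∑ ν ∈ range (n + 1), (a ν : ℂ) * z ^ ν = 0) : m ≤ ‖z‖ := by
  by_contra! hzm
  have hcoef : ∀ ν ∈ range n, 0 ≤ a ν - m * a (ν + 1) :=
    fun ν hν => sub_nonneg.2 (hdec ν (mem_range.1 hν))
  have hident := sub_mul_sum_range_add_mul_eq (fun ν => (a ν : ℂ)) m z n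
  rw [hz, mul_zero, zero_add] at hident
  have hnorm : ‖((m * a 0 : ℝ) : ℂ)‖ ≤
      ∑ ν ∈ range n, (a ν - m * a (ν + 1)) * ‖z‖ ^ (ν + 1) + a n * ‖z‖ ^ (n + 1) := by
    push_cast
    rw [hident]
    refine (norm_add_le _ _).trans (add_le_add ((norm_sum_le _ _).trans
      (sum_le_sum fun ν hν => le_of_eq ?_)) (le_of_eq ?_))
    · rw [norm_mul, norm_pow, ← Complex.ofReal_mul, ← Complex.ofReal_sub, Complex.norm_real,
        Real.norm_of_nonneg (hcoef ν hν)]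
    · rw [norm_mul, norm_pow, Complex.norm_real, Real.norm_of_nonneg ha.le]
  have hstrict :
      ∑ ν ∈ range n, (a ν - m * a (ν + 1)) * ‖z‖ ^ (ν + 1) + a n * ‖z‖ ^ (n + 1) <
        ∑ ν ∈ range n, (a ν - m * a (ν + 1)) * m ^ (ν + 1) + a n * m ^ (n + 1) :=
    add_lt_add_of_le_of_lt
      (sum_le_sum fun ν hν => mul_le_mul_of_nonneg_left
        (pow_le_pow_left₀ (norm_nonneg z) hzm.le _) (hcoef ν hν))
      (mul_lt_mul_of_pos_left (pow_lt_pow_left₀ hzm (norm_nonneg z) n.succ_ne_zero) ha)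
  have htele := sub_mul_sum_range_add_mul_eq a m m n
  rw [sub_self, zero_mul, zero_add] at htele
  linarith [Real.le_norm_self (m * a 0), Complex.norm_real (m * a 0)]

theorem stmt_6_general (n : ℕ) (z : ℂ)
    (hz : Polynomial.eval z
      (∑ ν ∈ Finset.range (n + 1),
        Polynomial.C (binomHalf ν) * (-Polynomial.X) ^ ν) = 0) :
    1 + 1 / (2 * (n : ℝ) + 1) ≤ ‖z‖ := by
  rw [eval_sum_C_binomHalf_mul_neg_X_pow] at hz
  refine le_norm_of_sum_mul_pow_eq_zero (absBinomHalf_pos n) (fun ν hν => ?_) hz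
  have hνn : (ν : ℝ) + 1 ≤ n := by exact_mod_cast hν
  have hratio : (1 + 1 / (2 * (n : ℝ) + 1)) * (2 * ν + 1) ≤ 2 * ν + 2 := by
    have : (2 * ν + 1) / (2 * (n : ℝ) + 1) ≤ 1 := (div_le_one (by positivity)).2 (by linarith)
    rw [add_mul, one_mul, one_div_mul_eq_div]
    linarith
  nlinarith [absBinomHalf_succ_mul ν, absBinomHalf_pos (ν + 1)]

theorem stmt_6 (n : ℕ) (hn : 1 ≤ n) (z : ℂ)
    (hz : Polynomial.eval z
      (∑ ν ∈ Finset.range (n + 1),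
        Polynomial.C (binomHalf ν) * (-Polynomial.X) ^ ν) = 0) :
    1 + 1 / (2 * (n : ℝ) + 1) ≤ ‖z‖ :=
  stmt_6_general n z hz
end

section
/- Let r(n) denote the minimum absolute value of the complex roots of P_n(X) = ∑_{ν=0}^n binom(-1/2,ν)(-X)^ν. Then there exists an absolute constant C such that r(n) ≤ 1 + C·(log n)/n for all n ≥ 2. -/
open Polynomial

lemma prod_range_natCast_sub_eq_factorial_s7 (ν : ℕ) :
    ∏ κ ∈ Finset.range ν, ((ν : ℂ) - κ) = ν.factorial := by
  rw [← Nat.descFactorial_self, Nat.descFactorial_eq_prod_range, Nat.cast_prod]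
  refine Finset.prod_congr rfl fun κ hκ => ?_
  rw [Nat.cast_sub (Finset.mem_range.mp hκ).le]

lemma binomHalf_eq_prod_div_factorial (ν : ℕ) :
    binomHalf ν = (∏ κ ∈ Finset.range ν, ((-1/2 : ℂ) - κ)) / ν.factorial := by
  rw [binomHalf, Finset.prod_div_distrib, prod_range_natCast_sub_eq_factorial_s7]

lemma binomHalf_succ (ν : ℕ) :
    binomHalf (ν + 1) = binomHalf ν * (((-1/2 : ℂ) - ν) / (ν + 1)) := by
  rw [binomHalf_eq_prod_div_factorial, binomHalf_eq_prod_div_factorial, Finset.prod_range_succ,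
    Nat.factorial_succ, div_mul_div_comm]
  push_cast
  ring

lemma inv_two_mul_add_one_le_norm_binomHalf (ν : ℕ) : (2 * ν + 1 : ℝ)⁻¹ ≤ ‖binomHalf ν‖ := by
  induction ν with
  | zero => simp [binomHalf]
  | succ ν ih =>
    have h_num : ‖(-1/2 : ℂ) - ν‖ = ν + 1/2 := by
      rw [show (-1/2 : ℂ) - ν = ((-(ν + 1/2) : ℝ) : ℂ) by push_cast; ring, Complex.norm_real,
        norm_neg, Real.norm_of_nonneg (by positivity)]
    have h_den : ‖(ν : ℂ) + 1‖ = ν + 1 := by exact_mod_cast Complex.norm_natCast (ν + 1)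
    rw [binomHalf_succ, norm_mul, norm_div, h_num, h_den]
    calc (2 * ((ν + 1 : ℕ) : ℝ) + 1)⁻¹ ≤ (2 * ν + 2 : ℝ)⁻¹ :=
          inv_anti₀ (by positivity) (by push_cast; linarith)
      _ = (2 * ν + 1 : ℝ)⁻¹ * ((ν + 1/2) / (ν + 1)) := by field_simp
      _ ≤ ‖binomHalf ν‖ * ((ν + 1/2) / (ν + 1)) := by gcongr

lemma binomHalf_ne_zero (ν : ℕ) : binomHalf ν ≠ 0 :=
  norm_pos_iff.mp ((inv_pos.mpr (by positivity)).trans_le (inv_two_mul_add_one_le_norm_binomHalf ν))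

noncomputable def binomHalfPoly (n : ℕ) : ℂ[X] :=
  ∑ ν ∈ Finset.range (n + 1), C (binomHalf ν) * (-X) ^ ν

lemma coeff_binomHalfPoly (n k : ℕ) :
    (binomHalfPoly n).coeff k = if k ≤ n then (-1) ^ k * binomHalf k else 0 := by
  have h_term (ν : ℕ) : C (binomHalf ν) * (-X) ^ ν = C ((-1) ^ ν * binomHalf ν) * X ^ ν := by
    rw [neg_pow, C_mul, C_pow, C_neg, C_1]
    ring
  simp only [binomHalfPoly, h_term, finsetSum_coeff, coeff_C_mul_X_pow, Finset.sum_ite_eq,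
    Finset.mem_range, Nat.lt_succ_iff]

lemma coeff_zero_binomHalfPoly (n : ℕ) : (binomHalfPoly n).coeff 0 = 1 := by
  simp [coeff_binomHalfPoly, binomHalf]

lemma natDegree_binomHalfPoly (n : ℕ) : (binomHalfPoly n).natDegree = n :=
  natDegree_eq_of_le_of_coeff_ne_zero
    (natDegree_le_iff_coeff_eq_zero.mpr fun k hk => by
      rw [coeff_binomHalfPoly, if_neg (by exact_mod_cast hk.not_ge)])
    (by simp [coeff_binomHalfPoly, binomHalf_ne_zero])

lemma norm_leadingCoeff_binomHalfPoly (n : ℕ) :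
    ‖(binomHalfPoly n).leadingCoeff‖ = ‖binomHalf n‖ := by
  simp [leadingCoeff, natDegree_binomHalfPoly, coeff_binomHalfPoly]

lemma Polynomial.Splits.exists_mem_roots_norm_pow_mul_le {K : Type*} [NormedField K] {p : K[X]}
    (hp : p.Splits) (hdeg : p.natDegree ≠ 0) :
    ∃ z ∈ p.roots, ‖z‖ ^ p.natDegree * ‖p.leadingCoeff‖ ≤ ‖p.coeff 0‖ := by
  have hcard : Multiset.card p.roots = p.natDegree := splits_iff_card_roots.mp hp
  obtain ⟨z, hz, hmin⟩ := Multiset.exists_min_image (‖·‖₊) (s := p.roots)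
    (Multiset.card_pos.mp (by omega))
  refine ⟨z, hz, ?_⟩
  have h_pow : ‖z‖₊ ^ p.natDegree ≤ ‖p.roots.prod‖₊ := calc
    ‖z‖₊ ^ p.natDegree = ‖z‖₊ ^ Multiset.card (p.roots.map (‖·‖₊)) := by
      rw [Multiset.card_map, hcard]
    _ ≤ (p.roots.map (‖·‖₊)).prod := Multiset.pow_card_le_prod
      (Multiset.forall_mem_map_iff.mpr hmin)
    _ = ‖p.roots.prod‖₊ := (map_multiset_prod (nnnormHom (α := K)) _).symm
  rw [hp.coeff_zero_eq_leadingCoeff_mul_prod_roots, norm_mul, norm_mul, norm_pow, norm_neg,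
    norm_one, one_pow, one_mul, mul_comm]
  gcongr
  exact_mod_cast h_pow

lemma Real.exp_le_one_add_mul_exp (x : ℝ) : Real.exp x ≤ 1 + x * Real.exp x := by
  have := mul_le_mul_of_nonneg_left (Real.one_sub_le_exp_neg x) (Real.exp_pos x).le
  rw [← Real.exp_add, add_neg_cancel, Real.exp_zero] at this
  linarith

lemma le_one_add_log_div_of_pow_le_pow {r : ℝ} {n : ℕ} (k : ℕ) (hr : 0 ≤ r) (hn : 0 < n)
    (h : r ^ n ≤ (n : ℝ) ^ k) : r ≤ 1 + k * Real.exp k * Real.log n / n := by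
  have hn' : (0 : ℝ) < n := by exact_mod_cast hn
  set q := k * Real.log n / n with hq
  have hq0 : 0 ≤ q := by have := Real.log_nonneg (by exact_mod_cast hn : (1 : ℝ) ≤ n); positivity
  have hqk : q ≤ k := by
    rw [hq, div_le_iff₀ hn']
    have : Real.log n ≤ n := (Real.log_le_sub_one_of_pos hn').trans (by linarith)
    exact mul_le_mul_of_nonneg_left this k.cast_nonneg
  have h_exp_pow : Real.exp q ^ n = (n : ℝ) ^ k := by
    rw [← Real.exp_nat_mul, show (n : ℝ) * q = k * Real.log n by rw [hq]; field_simp,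
      Real.exp_nat_mul, Real.exp_log hn']
  have hr_exp : r ≤ Real.exp q :=
    (pow_le_pow_iff_left₀ hr (Real.exp_pos q).le hn.ne').mp (h_exp_pow ▸ h)
  calc r ≤ 1 + q * Real.exp q := hr_exp.trans (Real.exp_le_one_add_mul_exp q)
    _ ≤ 1 + q * Real.exp k := by gcongr
    _ = 1 + k * Real.exp k * Real.log n / n := by rw [hq]; ring

theorem stmt_7 :
    ∃ C : ℝ, ∀ n : ℕ, 2 ≤ n →
      ∃ z : ℂ,
        Polynomial.eval z
          (∑ ν ∈ Finset.range (n + 1),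
            Polynomial.C (binomHalf ν) * (-Polynomial.X) ^ ν) = 0 ∧
        ‖z‖ ≤ 1 + C * Real.log n / n := by
  refine ⟨3 * Real.exp 3, fun n hn => ?_⟩
  have hP : binomHalfPoly n ≠ 0 := fun h => by simpa [h] using coeff_zero_binomHalfPoly n
  obtain ⟨z, hz, hz_le⟩ := (IsAlgClosed.splits (binomHalfPoly n)).exists_mem_roots_norm_pow_mul_le
    (by rw [natDegree_binomHalfPoly]; omega)
  rw [natDegree_binomHalfPoly, coeff_zero_binomHalfPoly, norm_one,
    norm_leadingCoeff_binomHalfPoly] at hz_le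
  have h_pow : ‖z‖ ^ n ≤ (n : ℝ) ^ 3 := calc
    ‖z‖ ^ n ≤ ‖binomHalf n‖⁻¹ := by
      rw [← one_div, le_div_iff₀ (norm_pos_iff.mpr (binomHalf_ne_zero n))]
      exact hz_le
    _ ≤ 2 * n + 1 := inv_le_of_inv_le₀ (by positivity) (inv_two_mul_add_one_le_norm_binomHalf n)
    _ ≤ (n : ℝ) ^ 3 := by
      have hn' : (2 : ℝ) ≤ n := by exact_mod_cast hn
      nlinarith [mul_le_mul_of_nonneg_left hn' (by positivity : (0 : ℝ) ≤ n * n)]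
  refine ⟨z, (mem_roots hP).mp hz, ?_⟩
  exact_mod_cast le_one_add_log_div_of_pow_le_pow 3 (norm_nonneg z) (by omega) h_pow
end

section
/- Let n ≥ 1 and Ω = {ω ∈ ℂ : ω^n = 1} (respectively ω^n = -1). For each ω ∈ Ω, 2·∑_{ξ ∈ Ω, ξ≠ω} ∏_{ϖ ∈ Ω, ϖ ≠ ω, ϖ ≠ ξ} (ω - ϖ) = (n-1)n/ω² (respectively -(n-1)n/ω²). -/
/-!
Write `P = X ^ n - s = ∏_{ϖ ∈ Ω} (X - ϖ)`, which has simple roots. Differentiating the product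
twice and evaluating at a root `ω` leaves exactly twice the sum of the statement, since every
term still containing the factor `X - ω` vanishes. On the other hand
`P'' = n (n - 1) X ^ (n - 2)`, so `ω ^ 2 P''(ω) = n (n - 1) ω ^ n = n (n - 1) s`.
-/

open Polynomial Finset Lagrange

namespace Lagrange

variable {R ι : Type*} [CommRing R] [DecidableEq ι] {s : Finset ι} {v : ι → R} {i : ι}

theorem eval_node_derivative_derivative_nodal (hi : i ∈ s) :
    eval (v i) (derivative (derivative (nodal s v))) =
      2 * ∑ j ∈ s.erase i, eval (v i) (nodal ((s.erase i).erase j) v) := by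
  have h_other : ∀ j ∈ s.erase i, eval (v i) (derivative (nodal (s.erase j) v)) =
      eval (v i) (nodal ((s.erase i).erase j) v) := fun j hj => by
    rw [eval_nodal_derivative_eval_node_eq (mem_erase.2 ⟨(ne_of_mem_erase hj).symm, hi⟩),
      erase_right_comm]
  rw [derivative_nodal, derivative_sum, eval_finsetSum, ← add_sum_erase _ _ hi,
    sum_congr rfl h_other, derivative_nodal, eval_finsetSum, two_mul]

end Lagrange

theorem Polynomial.Splits.nodal_roots_toFinset_eq {k : Type*} [Field k] [DecidableEq k] {p : k[X]}
    (hsplit : p.Splits) (hmonic : p.Monic) (hnodup : p.roots.Nodup) :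
    nodal p.roots.toFinset id = p := by
  rw [nodal, prod_eq_multiset_prod, Multiset.toFinset_val, hnodup.dedup]
  exact (hsplit.eq_prod_roots_of_monic hmonic).symm

theorem Polynomial.sq_mul_eval_derivative_derivative_X_pow_sub_C {R : Type*} [CommRing R]
    (n : ℕ) (s x : R) :
    x ^ 2 * eval x (derivative (derivative (X ^ n - C s))) = n * (n - 1) * x ^ n := by
  rcases n with _ | _ | n
  · simp
  · simp
  · simp only [derivative_sub, derivative_C, sub_zero, derivative_X_pow, derivative_C_mul,
      eval_mul, eval_C, eval_pow, eval_X]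
    push_cast
    ring

theorem stmt_10 (n : ℕ) (hn : 1 ≤ n) (s : ℂ) (hs : s = 1 ∨ s = -1)
    (ω : ℂ)
    (hω : ω ∈ (Polynomial.X ^ n - Polynomial.C s : Polynomial ℂ).roots.toFinset) :
    2 * ∑ ξ ∈ ((Polynomial.X ^ n - Polynomial.C s : Polynomial ℂ).roots.toFinset).erase ω,
        ∏ ϖ ∈ (((Polynomial.X ^ n - Polynomial.C s : Polynomial ℂ).roots.toFinset).erase ω).erase ξ,
          (ω - ϖ) = s * ((n : ℂ) - 1) * n / ω ^ 2 := by
  set P : ℂ[X] := X ^ n - C s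
  have hn0 : n ≠ 0 := Nat.one_le_iff_ne_zero.mp hn
  have hs0 : s ≠ 0 := by rcases hs with rfl | rfl <;> norm_num
  have hroot : ω ^ n = s := by
    simpa [P, sub_eq_zero] using isRoot_of_mem_roots (Multiset.mem_toFinset.mp hω)
  have hω0 : ω ≠ 0 := by
    rintro rfl
    exact hs0 (hroot ▸ zero_pow hn0)
  have hP : nodal P.roots.toFinset id = P :=
    (IsAlgClosed.splits P).nodal_roots_toFinset_eq (monic_X_pow_sub_C s hn0)
      (nodup_roots (separable_X_pow_sub_C s (Nat.cast_ne_zero.mpr hn0) hs0))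
  have h_second_derivative := eval_node_derivative_derivative_nodal (v := id) hω
  simp only [hP, id, eval_nodal] at h_second_derivative
  rw [← h_second_derivative, eq_div_iff (pow_ne_zero 2 hω0), mul_comm,
    sq_mul_eval_derivative_derivative_X_pow_sub_C, hroot]
  ring
end

section
/- Let n ≥ 1 and Ω = {ω ∈ ℂ : ω^n = -1}. Then as polynomials, ∑_{ω∈Ω} ω ∏_{ϖ∈Ω, ϖ≠ω}(X - ϖ)² = -n² X^{n-1}. -/
/-!
Write `P = ∏ (X - ω)` over the roots and `L ω = P / (X - ω)`. For constants `c ω`, the sum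
`∑ c ω * L ω ^ 2` is the Wronskian `P' * Q - P * Q'` of `P` and `Q = ∑ c ω * L ω`: this is
`(Q / P)' = -∑ c ω / (X - ω) ^ 2` with denominators cleared. Taking `c ω = ω` gives
`Q = X * P' - n * P`, which for `P = X ^ n + a` is the constant `-n * a`, so the sum is
`-n * a * P' = -n ^ 2 * a * X ^ (n - 1)`.
-/

open Polynomial Finset Lagrange

namespace Lagrange

variable {R ι : Type*} [CommRing R] [DecidableEq ι] (s : Finset ι) (v : ι → R)

theorem nodal_erase_mul_nodal_erase {i j : ι} (hi : i ∈ s) (hj : j ∈ s) (hij : i ≠ j) :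
    nodal (s.erase i) v * nodal (s.erase j) v = nodal s v * nodal ((s.erase i).erase j) v := by
  have hji : j ∈ s.erase i := mem_erase.mpr ⟨hij.symm, hj⟩
  have hij' : i ∈ s.erase j := mem_erase.mpr ⟨hij, hi⟩
  rw [nodal_eq_mul_nodal_erase hi, nodal_eq_mul_nodal_erase hji, nodal_eq_mul_nodal_erase hij',
    erase_right_comm]
  ring

theorem X_mul_derivative_nodal :
    X * derivative (nodal s v) = #s • nodal s v + ∑ i ∈ s, C (v i) * nodal (s.erase i) v := by
  have hterm : ∀ i ∈ s, X * nodal (s.erase i) v = nodal s v + C (v i) * nodal (s.erase i) v :=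
    fun i hi => by rw [nodal_eq_mul_nodal_erase hi]; ring
  rw [derivative_nodal, mul_sum, sum_congr rfl hterm, sum_add_distrib, sum_const]

theorem sum_C_mul_nodal_erase_sq (c : ι → R) :
    ∑ i ∈ s, C (c i) * nodal (s.erase i) v ^ 2 =
      derivative (nodal s v) * ∑ i ∈ s, C (c i) * nodal (s.erase i) v -
        nodal s v * derivative (∑ i ∈ s, C (c i) * nodal (s.erase i) v) := by
  have hQ : derivative (∑ i ∈ s, C (c i) * nodal (s.erase i) v) =
      ∑ i ∈ s, C (c i) * ∑ j ∈ s.erase i, nodal ((s.erase i).erase j) v := by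
    simp only [derivative_sum, derivative_C_mul, derivative_nodal]
  rw [hQ, derivative_nodal, sum_mul_sum, mul_sum, sum_comm, eq_sub_iff_add_eq, ← sum_add_distrib]
  refine sum_congr rfl fun i hi => ?_
  rw [← add_sum_erase _ _ hi, mul_sum, mul_sum]
  refine congrArg₂ (· + ·) (by ring) (sum_congr rfl fun j hj => ?_)
  rw [mul_left_comm,
    ← nodal_erase_mul_nodal_erase s v hi (mem_of_mem_erase hj) (ne_of_mem_erase hj).symm]
  ring

theorem nodal_roots_toFinset {K : Type*} [Field K] [DecidableEq K] {p : K[X]}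
    (hsplit : p.Splits) (hm : p.Monic) (hsep : p.Separable) : nodal p.roots.toFinset id = p := by
  rw [nodal_eq, prod_eq_multiset_prod, Multiset.toFinset_val,
    Multiset.dedup_eq_self.mpr (nodup_roots hsep)]
  exact (hsplit.eq_prod_roots_of_monic hm).symm

end Lagrange

theorem sum_C_mul_prod_erase_sq_roots_X_pow_add_C {K : Type*} [Field K] [DecidableEq K] {n : ℕ}
    {a : K} (hn : (n : K) ≠ 0) (ha : a ≠ 0) (hsplit : (X ^ n + C a).Splits) :
    ∑ ω ∈ (X ^ n + C a).roots.toFinset,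
        C ω * ∏ ϖ ∈ (X ^ n + C a).roots.toFinset.erase ω, (X - C ϖ) ^ 2 =
      C (-(n : K) ^ 2 * a) * X ^ (n - 1) := by
  obtain ⟨m, rfl⟩ : ∃ m, n = m + 1 :=
    Nat.exists_eq_succ_of_ne_zero (by rintro rfl; exact hn Nat.cast_zero)
  set P : K[X] := X ^ (m + 1) + C a
  set s := P.roots.toFinset
  have hsep : P.Separable := by
    simpa [sub_eq_add_neg] using separable_X_pow_sub_C (-a) hn (neg_ne_zero.mpr ha)
  have hP : nodal s id = P := nodal_roots_toFinset hsplit (monic_X_pow_add_C a m.succ_ne_zero) hsep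
  have hcard : #s = m + 1 := by rw [← natDegree_nodal (v := id), hP, natDegree_X_pow_add_C]
  have hP' : derivative P = C ((m + 1 : ℕ) : K) * X ^ m := by simp [P]
  have hT : ∑ ω ∈ s, C (id ω) * nodal (s.erase ω) id = C (-((m + 1 : ℕ) : K) * a) := by
    have h := X_mul_derivative_nodal s id
    rw [hP, hcard, hP', ← sub_eq_iff_eq_add'] at h
    rw [← h, nsmul_eq_mul, ← C_eq_natCast, map_mul, map_neg]
    ring
  calc _ = ∑ ω ∈ s, C (id ω) * nodal (s.erase ω) id ^ 2 := by
        simp only [nodal_eq, id, prod_pow]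
    _ = _ := sum_C_mul_nodal_erase_sq s id id
    _ = _ := by
      rw [hT, hP, hP', derivative_C, mul_zero, sub_zero, Nat.add_sub_cancel]
      simp only [map_mul, map_neg, map_pow]
      ring

theorem stmt_13 (n : ℕ) (hn : 1 ≤ n) :
    ∑ ω ∈ (Polynomial.X ^ n + 1 : Polynomial ℂ).roots.toFinset,
      Polynomial.C ω *
        ∏ ϖ ∈ ((Polynomial.X ^ n + 1 : Polynomial ℂ).roots.toFinset).erase ω,
          (Polynomial.X - Polynomial.C ϖ) ^ 2 =
    Polynomial.C (-(n : ℂ) ^ 2) * Polynomial.X ^ (n - 1) := by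
  have h := sum_C_mul_prod_erase_sq_roots_X_pow_add_C (Nat.cast_ne_zero.mpr (by omega))
    one_ne_zero (IsAlgClosed.splits (X ^ n + C (1 : ℂ)))
  rwa [map_one, mul_one] at h
end

section
/- Let n ≥ 1, let Ω be the set of roots of X^n - 1 (or of X^n + 1), and let L_ω be the Lagrange interpolator with nodes Ω at node ω. Then for every z ∈ ℂ with |z| = 1, ∑_{ω∈Ω} |L_ω(z)|² = 1. -/
/-! At the roots of `X ^ n - s`, which are distinct,
`∏_{ϖ ≠ ω} (X - ϖ) = (X ^ n - ω ^ n) / (X - ω)`, so the Lagrange basis polynomial is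
`L_ω(z) = n⁻¹ ∑_{i<n} (z / ω) ^ i`. Writing the roots as `ζ⁻ᵏ α` with `ζ` a primitive `n`-th
root of unity, `k ↦ n L_{ζ⁻ᵏ α}(z)` is the discrete Fourier transform of `i ↦ (z / α) ^ i`, and
Parseval's identity gives `∑_k |L_{ζ⁻ᵏ α}(z)|² = n⁻¹ ∑_{i<n} |z / α| ^ (2 i) = 1`. -/

open Polynomial Finset

namespace Polynomial

theorem Monic.prod_roots_toFinset_X_sub_C {R : Type*} [CommRing R] [IsDomain R] [DecidableEq R]
    {p : R[X]} (hm : p.Monic) (hsplit : p.Splits) (hnd : p.roots.Nodup) :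
    ∏ ϖ ∈ p.roots.toFinset, (X - C ϖ) = p := by
  rw [prod_eq_multiset_prod, Multiset.toFinset_val, hnd.dedup,
    ← hsplit.eq_prod_roots_of_monic hm]

theorem mem_roots_X_pow_sub_C_toFinset {R : Type*} [CommRing R] [IsDomain R] [DecidableEq R]
    {n : ℕ} (hn : n ≠ 0) {a ω : R} : ω ∈ (X ^ n - C a).roots.toFinset ↔ ω ^ n = a := by
  rw [Multiset.mem_toFinset, ← nthRoots, mem_nthRoots (Nat.pos_of_ne_zero hn)]

section Field

variable {K : Type*} [Field K] [DecidableEq K] {n : ℕ} {a ω : K}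

theorem prod_erase_X_sub_C_roots_X_pow_sub_C (hsplit : (X ^ n - C a).Splits)
    (hn : (n : K) ≠ 0) (ha : a ≠ 0) (hω : ω ∈ (X ^ n - C a).roots.toFinset) :
    ∏ ϖ ∈ (X ^ n - C a).roots.toFinset.erase ω, (X - C ϖ) =
      ∑ i ∈ range n, X ^ i * C ω ^ (n - 1 - i) := by
  have hn0 : n ≠ 0 := by rintro rfl; simp at hn
  refine mul_left_cancel₀ (X_sub_C_ne_zero ω) ?_
  rw [mul_prod_erase _ (fun ϖ => X - C ϖ) hω,
    (monic_X_pow_sub_C a hn0).prod_roots_toFinset_X_sub_C hsplit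
      (nodup_roots (separable_X_pow_sub_C a hn ha)),
    mul_comm, geom_sum₂_mul, ← C_pow, (mem_roots_X_pow_sub_C_toFinset hn0).mp hω]

theorem prod_erase_sub_div_sub_roots_X_pow_sub_C (hsplit : (X ^ n - C a).Splits)
    (hn : (n : K) ≠ 0) (ha : a ≠ 0) (hω : ω ∈ (X ^ n - C a).roots.toFinset) (z : K) :
    ∏ ϖ ∈ (X ^ n - C a).roots.toFinset.erase ω, (z - ϖ) / (ω - ϖ) =
      (∑ i ∈ range n, (z / ω) ^ i) / n := by
  have hn0 : n ≠ 0 := by rintro rfl; simp at hn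
  have hω0 : ω ≠ 0 := by
    rintro rfl
    exact ha ((mem_roots_X_pow_sub_C_toFinset hn0).mp hω ▸ zero_pow hn0)
  have heval (x : K) : ∏ ϖ ∈ (X ^ n - C a).roots.toFinset.erase ω, (x - ϖ) =
      (∑ i ∈ range n, (x / ω) ^ i) * ω ^ (n - 1) := by
    have := congrArg (eval x) (prod_erase_X_sub_C_roots_X_pow_sub_C hsplit hn ha hω)
    simp only [eval_prod, eval_finsetSum, eval_sub, eval_mul, eval_pow, eval_X, eval_C] at this
    rw [this, sum_mul]
    refine sum_congr rfl fun i hi => ?_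
    rw [pow_sub₀ _ hω0 (by grind), div_pow]
    ring
  rw [prod_div_distrib, heval, heval, div_self hω0]
  simp only [one_pow, sum_const, card_range, nsmul_eq_mul, mul_one]
  field_simp

end Field

end Polynomial

namespace IsPrimitiveRoot

variable {n : ℕ}

theorem sum_pow_div_pow_pow {K : Type*} [Field K] {ζ : K} (hζ : IsPrimitiveRoot ζ n)
    {i j : ℕ} (hi : i < n) (hj : j < n) :
    ∑ k ∈ range n, (ζ ^ i / ζ ^ j) ^ k = if i = j then (n : K) else 0 := by
  split_ifs with hij
  · subst hij
    rw [div_self (pow_ne_zero _ (hζ.ne_zero (by omega)))]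
    simp
  · have hne : ζ ^ i / ζ ^ j ≠ 1 := fun h =>
      hij (hζ.pow_inj hi hj (div_eq_one_iff_eq (pow_ne_zero _ (hζ.ne_zero (by omega))) |>.mp h))
    rw [geom_sum_eq hne, div_pow, ← pow_mul, ← pow_mul, mul_comm i, mul_comm j, pow_mul, pow_mul,
      hζ.pow_eq_one, one_pow, one_pow, div_one, sub_self, zero_div]

theorem sum_sq_norm_sum_mul_pow_mul {ζ : ℂ} (hζ : IsPrimitiveRoot ζ n) (f : ℕ → ℂ) :
    ∑ k ∈ range n, ‖∑ i ∈ range n, f i * ζ ^ (i * k)‖ ^ 2 = n * ∑ i ∈ range n, ‖f i‖ ^ 2 := by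
  rcases Nat.eq_zero_or_pos n with rfl | hn
  · simp
  have hconj : starRingEnd ℂ ζ = ζ⁻¹ := by
    rw [Complex.inv_def, ← Complex.sq_norm, hζ.norm'_eq_one hn.ne']
    norm_num
  apply Complex.ofReal_injective
  push_cast
  simp_rw [← Complex.mul_conj', map_sum, map_mul, map_pow, hconj, sum_mul_sum, mul_sum]
  calc _ = ∑ i ∈ range n, ∑ j ∈ range n,
        f i * starRingEnd ℂ (f j) * ∑ k ∈ range n, (ζ ^ i / ζ ^ j) ^ k := by
        rw [sum_comm]
        refine sum_congr rfl fun i _ => ?_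
        rw [sum_comm]
        refine sum_congr rfl fun j _ => ?_
        rw [mul_sum]
        refine sum_congr rfl fun k _ => ?_
        rw [div_pow, ← pow_mul, ← pow_mul, div_eq_mul_inv, ← inv_pow]
        ring
    _ = _ := by
        refine sum_congr rfl fun i hi => ?_
        rw [sum_congr rfl fun j hj => by
          rw [hζ.sum_pow_div_pow_pow (mem_range.mp hi) (mem_range.mp hj), mul_ite, mul_zero]]
        rw [sum_ite_eq, if_pos hi, mul_comm]

end IsPrimitiveRoot

theorem sum_sq_norm_prod_erase_sub_div_sub_roots_X_pow_sub_C {n : ℕ} (hn : n ≠ 0) {s : ℂ}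
    (hs : ‖s‖ = 1) {z : ℂ} (hz : ‖z‖ = 1) :
    ∑ ω ∈ (X ^ n - C s : ℂ[X]).roots.toFinset,
      ‖∏ ϖ ∈ (X ^ n - C s : ℂ[X]).roots.toFinset.erase ω, (z - ϖ) / (ω - ϖ)‖ ^ 2 = 1 := by
  have hs0 : s ≠ 0 := norm_ne_zero_iff.mp (by simp [hs])
  have hnC : (n : ℂ) ≠ 0 := Nat.cast_ne_zero.mpr hn
  obtain ⟨α, hα⟩ := IsAlgClosed.exists_pow_nat_eq s (Nat.pos_of_ne_zero hn)
  have hα0 : α ≠ 0 := by rintro rfl; exact hs0 (hα ▸ zero_pow hn)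
  have hαnorm : ‖α‖ = 1 := by
    rw [← pow_eq_one_iff_of_nonneg (norm_nonneg α) hn, ← norm_pow, hα, hs]
  obtain ⟨ζ, hζ⟩ : ∃ ζ : ℂ, IsPrimitiveRoot ζ n := ⟨_, Complex.isPrimitiveRoot_exp n hn⟩
  have hroots : (X ^ n - C s : ℂ[X]).roots.toFinset = (range n).image (fun k => ζ⁻¹ ^ k * α) := by
    rw [← nthRoots, hζ.inv.nthRoots_eq hα, Multiset.toFinset_map, Multiset.toFinset_range]
  rw [sum_congr rfl fun ω hω => by
      rw [prod_erase_sub_div_sub_roots_X_pow_sub_C (IsAlgClosed.splits _) hnC hs0 hω],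
    hroots, sum_image (hζ.inv.injOn_pow_mul hα0)]
  have hterm (k i : ℕ) : (z / (ζ⁻¹ ^ k * α)) ^ i = (z / α) ^ i * ζ ^ (i * k) := by
    rw [mul_comm i k, pow_mul, ← mul_pow, inv_pow]
    field_simp
  have hw : ‖z / α‖ = 1 := by rw [norm_div, hz, hαnorm, div_one]
  simp only [hterm]
  generalize z / α = w at hw ⊢
  simp only [norm_div, div_pow, ← sum_div, hζ.sum_sq_norm_sum_mul_pow_mul, norm_pow, hw, one_pow,
    sum_const, card_range, nsmul_eq_mul, mul_one, Complex.norm_natCast]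
  field_simp

theorem stmt_14 (n : ℕ) (hn : 1 ≤ n) (s : ℂ) (hs : s = 1 ∨ s = -1)
    (z : ℂ) (hz : ‖z‖ = 1) :
    ∑ ω ∈ (Polynomial.X ^ n - Polynomial.C s : Polynomial ℂ).roots.toFinset,
      ‖∏ ϖ ∈ ((Polynomial.X ^ n - Polynomial.C s : Polynomial ℂ).roots.toFinset).erase ω,
          ((z - ϖ) / (ω - ϖ))‖ ^ 2 = 1 :=
  sum_sq_norm_prod_erase_sub_div_sub_roots_X_pow_sub_C (by omega)
    (by rcases hs with rfl | rfl <;> simp) hz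
end

section
/- Let n, d be positive integers with d ≥ 2n - 1, let Ω = {ω : ω^n = 1} (or ω^n = -1), and let ℓ : ℂ[X]^{<d} → ℂ be the linear functional ℓ(f) = ∑_{ω∈Ω} u_ω f(ω) for given scalars u_ω ∈ ℂ. Then the operator norm of ℓ with respect to the sup-norm on the unit disk equals ∑_{ω∈Ω} |u_ω|; in particular, there exists f of degree ≤ 2n - 2 with sup_{|z|≤1} |f(z)| = 1 and |ℓ(f)| = ∑_{ω∈Ω} |u_ω|. -/
/-!
For an `n`-th root `ω` of a unimodular `s`, the polynomial `K_ω(z) = n⁻¹ ∑_{k<n} (ω̄ z)^k` of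
degree `n - 1` is the Lagrange basis polynomial of `ω` for the nodes `Ω = {ω : ωⁿ = s}`.
Since `conj (K_ω(z)) = K_z(ω)`, interpolating `K_z` on `Ω` gives `∑_ω |K_ω(z)|² = K_z(z) ≤ 1` on
the unit disk. Hence `f = ∑_ω ε_ω K_ω²`, with `|ε_ω| = 1` and `u_ω ε_ω = |u_ω|`, is bounded by `1`
on the disk and `ℓ(f) = ∑_ω |u_ω|`; the reverse inequality holds since `Ω` lies on the unit circle.
-/

open Polynomial Finset ComplexConjugate

theorem norm_eq_one_of_mem_nthRootsFinset {n : ℕ} (hn : n ≠ 0) {s ω : ℂ} (hs : ‖s‖ = 1)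
    (hω : ω ∈ nthRootsFinset n s) : ‖ω‖ = 1 :=
  (pow_eq_one_iff_of_nonneg (norm_nonneg ω) hn).mp <| by
    rw [← norm_pow, (mem_nthRootsFinset (Nat.pos_of_ne_zero hn) s).mp hω, hs]

theorem Complex.card_nthRootsFinset {n : ℕ} (hn : n ≠ 0) {s : ℂ} (hs : s ≠ 0) :
    #(nthRootsFinset n s) = n := by
  classical
  have hζ := Complex.isPrimitiveRoot_exp n hn
  rw [nthRootsFinset_def, Multiset.toFinset_card_of_nodup (hζ.nthRoots_nodup hs),
    hζ.card_nthRoots, if_pos (IsAlgClosed.exists_pow_nat_eq s (Nat.pos_of_ne_zero hn))]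

theorem exists_norm_eq_one_mul_eq_norm (w : ℂ) : ∃ ε : ℂ, ‖ε‖ = 1 ∧ w * ε = ‖w‖ := by
  refine ⟨Complex.exp (↑(-w.arg) * Complex.I), Complex.norm_exp_ofReal_mul_I _, ?_⟩
  conv_lhs => rw [← Complex.norm_mul_exp_arg_mul_I w]
  rw [mul_assoc, ← Complex.exp_add]
  push_cast
  simp

noncomputable def lagrangeKernel (n : ℕ) (c : ℂ) : ℂ[X] :=
  C (n : ℂ)⁻¹ * ∑ k ∈ range n, (C (conj c) * X) ^ k

section lagrangeKernel

variable {n : ℕ}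

theorem eval_lagrangeKernel (c z : ℂ) :
    (lagrangeKernel n c).eval z = (n : ℂ)⁻¹ * ∑ k ∈ range n, (conj c * z) ^ k := by
  simp [lagrangeKernel, eval_finsetSum]

theorem conj_eval_lagrangeKernel (c z : ℂ) :
    conj ((lagrangeKernel n c).eval z) = (lagrangeKernel n z).eval c := by
  simp [eval_lagrangeKernel, map_sum, mul_comm]

theorem natDegree_lagrangeKernel_le (c : ℂ) : (lagrangeKernel n c).natDegree ≤ n - 1 := by
  refine (natDegree_C_mul_le _ _).trans (natDegree_sum_le_of_forall_le _ _ fun k hk => ?_)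
  refine natDegree_pow_le.trans ?_
  have hX : (C (conj c) * X).natDegree ≤ 1 := (natDegree_C_mul_le _ _).trans natDegree_X_le
  calc k * (C (conj c) * X).natDegree ≤ k * 1 := Nat.mul_le_mul_left k hX
    _ ≤ n - 1 := by have := mem_range.mp hk; omega

theorem lagrangeKernel_mem_degreeLT (hn : n ≠ 0) (c : ℂ) :
    lagrangeKernel n c ∈ degreeLT ℂ n := by
  rw [mem_degreeLT]
  refine (degree_le_of_natDegree_le (natDegree_lagrangeKernel_le c)).trans_lt ?_
  exact_mod_cast Nat.sub_lt (Nat.pos_of_ne_zero hn) one_pos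

theorem norm_eval_lagrangeKernel_le {c z : ℂ} (hc : ‖c‖ ≤ 1) (hz : ‖z‖ ≤ 1) :
    ‖(lagrangeKernel n c).eval z‖ ≤ 1 := by
  have hterm : ∀ k ∈ range n, ‖(conj c * z) ^ k‖ ≤ 1 := fun k _ => by
    rw [norm_pow, norm_mul, Complex.norm_conj]
    exact pow_le_one₀ (by positivity) (mul_le_one₀ hc (norm_nonneg z) hz)
  calc ‖(lagrangeKernel n c).eval z‖
      ≤ (n : ℝ)⁻¹ * ∑ k ∈ range n, ‖(conj c * z) ^ k‖ := by
        rw [eval_lagrangeKernel, norm_mul, norm_inv, Complex.norm_natCast]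
        gcongr
        exact norm_sum_le _ _
    _ ≤ (n : ℝ)⁻¹ * n := by
        gcongr
        simpa using sum_le_sum hterm
    _ ≤ 1 := by
        rcases eq_or_ne n 0 with rfl | hn
        · simp
        · rw [inv_mul_cancel₀ (by exact_mod_cast hn)]

theorem eval_lagrangeKernel_of_pow_eq (hn : n ≠ 0) {ω ω' : ℂ} (hω : ‖ω‖ = 1)
    (h : ω' ^ n = ω ^ n) : (lagrangeKernel n ω).eval ω' = if ω = ω' then 1 else 0 := by
  have hunit : conj ω * ω = 1 := by
    rw [Complex.conj_mul', hω]; norm_num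
  rw [eval_lagrangeKernel]
  split_ifs with hωω'
  · subst hωω'
    simp [hunit, hn]
  · have hpow : (conj ω * ω') ^ n = 1 := by rw [mul_pow, h, ← mul_pow, hunit, one_pow]
    have hne : conj ω * ω' ≠ 1 := fun h1 => hωω' <| by
      calc ω = ω * (conj ω * ω') := by rw [h1, mul_one]
        _ = ω' := by rw [← mul_assoc, mul_comm ω, hunit, one_mul]
    rw [geom_sum_eq hne, hpow, sub_self, zero_div, mul_zero]

variable {s : ℂ}

theorem eval_lagrangeKernel_of_mem_nthRootsFinset (hn : n ≠ 0) (hs : ‖s‖ = 1) {ω ω' : ℂ}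
    (hω : ω ∈ nthRootsFinset n s) (hω' : ω' ∈ nthRootsFinset n s) :
    (lagrangeKernel n ω).eval ω' = if ω = ω' then 1 else 0 := by
  have hroot (x : ℂ) := mem_nthRootsFinset (Nat.pos_of_ne_zero hn) s (x := x)
  exact eval_lagrangeKernel_of_pow_eq hn (norm_eq_one_of_mem_nthRootsFinset hn hs hω)
    (((hroot ω').mp hω').trans ((hroot ω).mp hω).symm)

theorem eval_eq_sum_eval_mul_eval_lagrangeKernel (hn : n ≠ 0) (hs : ‖s‖ = 1) {p : ℂ[X]}
    (hp : p ∈ degreeLT ℂ n) (z : ℂ) :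
    p.eval z = ∑ ω ∈ nthRootsFinset n s, p.eval ω * (lagrangeKernel n ω).eval z := by
  have hinterp : p = ∑ ω ∈ nthRootsFinset n s, C (p.eval ω) * lagrangeKernel n ω := by
    refine eq_of_degree_sub_lt_of_eval_finset_eq (nthRootsFinset n s) ?_ fun ω' hω' => ?_
    · rw [Complex.card_nthRootsFinset hn (norm_ne_zero_iff.mp (hs.trans_ne one_ne_zero)),
        ← mem_degreeLT]
      refine Submodule.sub_mem _ hp (Submodule.sum_mem _ fun ω _ => ?_)
      rw [C_mul']
      exact Submodule.smul_mem _ _ (lagrangeKernel_mem_degreeLT hn ω)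
    · rw [eval_finsetSum, sum_congr rfl fun ω hω => by
        rw [eval_C_mul, eval_lagrangeKernel_of_mem_nthRootsFinset hn hs hω hω']]
      simp [hω']
  conv_lhs => rw [hinterp]
  simp [eval_finsetSum]

theorem sum_norm_eval_lagrangeKernel_sq_le_one (hn : n ≠ 0) (hs : ‖s‖ = 1) {z : ℂ}
    (hz : ‖z‖ ≤ 1) : ∑ ω ∈ nthRootsFinset n s, ‖(lagrangeKernel n ω).eval z‖ ^ 2 ≤ 1 := by
  have hreproducing : ((∑ ω ∈ nthRootsFinset n s, ‖(lagrangeKernel n ω).eval z‖ ^ 2 : ℝ) : ℂ) =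
      (lagrangeKernel n z).eval z := by
    rw [eval_eq_sum_eval_mul_eval_lagrangeKernel hn hs (lagrangeKernel_mem_degreeLT hn z) z]
    push_cast
    refine sum_congr rfl fun ω _ => ?_
    rw [← Complex.mul_conj', conj_eval_lagrangeKernel, mul_comm]
  calc ∑ ω ∈ nthRootsFinset n s, ‖(lagrangeKernel n ω).eval z‖ ^ 2
      = ‖(lagrangeKernel n z).eval z‖ := by
        rw [← hreproducing, Complex.norm_real, Real.norm_of_nonneg (by positivity)]
    _ ≤ 1 := norm_eval_lagrangeKernel_le hz hz

theorem exists_natDegree_le_norm_eval_le_one_eval_eq (hn : n ≠ 0) (hs : ‖s‖ = 1)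
    (ε : ℂ → ℂ) (hε : ∀ ω ∈ nthRootsFinset n s, ‖ε ω‖ ≤ 1) :
    ∃ f : ℂ[X], f.natDegree ≤ 2 * n - 2 ∧ (∀ z : ℂ, ‖z‖ ≤ 1 → ‖f.eval z‖ ≤ 1) ∧
      ∀ ω ∈ nthRootsFinset n s, f.eval ω = ε ω := by
  refine ⟨∑ ω ∈ nthRootsFinset n s, C (ε ω) * lagrangeKernel n ω ^ 2, ?_, fun z hz => ?_,
    fun ω' hω' => ?_⟩
  · refine natDegree_sum_le_of_forall_le _ _ fun ω _ => ?_
    refine (natDegree_C_mul_le _ _).trans (natDegree_pow_le.trans ?_)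
    have := natDegree_lagrangeKernel_le (n := n) ω
    omega
  · calc ‖(∑ ω ∈ nthRootsFinset n s, C (ε ω) * lagrangeKernel n ω ^ 2).eval z‖
        ≤ ∑ ω ∈ nthRootsFinset n s, ‖ε ω * (lagrangeKernel n ω).eval z ^ 2‖ := by
          simp only [eval_finsetSum, eval_C_mul, eval_pow]
          exact norm_sum_le _ _
      _ ≤ ∑ ω ∈ nthRootsFinset n s, ‖(lagrangeKernel n ω).eval z‖ ^ 2 := by
          refine sum_le_sum fun ω hω => ?_
          rw [norm_mul, norm_pow]
          exact mul_le_of_le_one_left (by positivity) (hε ω hω)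
      _ ≤ 1 := sum_norm_eval_lagrangeKernel_sq_le_one hn hs hz
  · rw [eval_finsetSum, sum_congr rfl fun ω hω => by
      rw [eval_C_mul, eval_pow, eval_lagrangeKernel_of_mem_nthRootsFinset hn hs hω hω']]
    simp [hω']

end lagrangeKernel

theorem norm_sum_mul_eval_le_sum_norm (Ω : Finset ℂ) (hΩ : ∀ ω ∈ Ω, ‖ω‖ ≤ 1) (u : ℂ → ℂ)
    {f : ℂ[X]} (hf : ∀ z : ℂ, ‖z‖ ≤ 1 → ‖f.eval z‖ ≤ 1) :
    ‖∑ ω ∈ Ω, u ω * f.eval ω‖ ≤ ∑ ω ∈ Ω, ‖u ω‖ :=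
  (norm_sum_le _ _).trans <| sum_le_sum fun ω hω => by
    rw [norm_mul]
    exact mul_le_of_le_one_right (norm_nonneg _) (hf ω (hΩ ω hω))

theorem stmt_16_general (n d : ℕ) (hn : 1 ≤ n)
    (s : ℂ) (hs : s = 1 ∨ s = -1) (u : ℂ → ℂ) :
    (∀ f : Polynomial ℂ, f.degree < d → (∀ z : ℂ, ‖z‖ ≤ 1 → ‖f.eval z‖ ≤ 1) →
      ‖∑ ω ∈ (Polynomial.X ^ n - Polynomial.C s : Polynomial ℂ).roots.toFinset,
          u ω * f.eval ω‖ ≤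
      ∑ ω ∈ (Polynomial.X ^ n - Polynomial.C s : Polynomial ℂ).roots.toFinset, ‖u ω‖) ∧
    ∃ f : Polynomial ℂ, f.natDegree ≤ 2 * n - 2 ∧
      (∀ z : ℂ, ‖z‖ ≤ 1 → ‖f.eval z‖ ≤ 1) ∧
      (∃ z : ℂ, ‖z‖ ≤ 1 ∧ ‖f.eval z‖ = 1) ∧
      ‖∑ ω ∈ (Polynomial.X ^ n - Polynomial.C s : Polynomial ℂ).roots.toFinset,
          u ω * f.eval ω‖ =
        ∑ ω ∈ (Polynomial.X ^ n - Polynomial.C s : Polynomial ℂ).roots.toFinset, ‖u ω‖ := by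
  have hn0 : n ≠ 0 := by omega
  have hs1 : ‖s‖ = 1 := by rcases hs with rfl | rfl <;> simp
  have hΩ : (X ^ n - C s : ℂ[X]).roots.toFinset = nthRootsFinset n s := by
    classical
    rw [nthRootsFinset_def]
    rfl
  have hunit : ∀ ω ∈ nthRootsFinset n s, ‖ω‖ = 1 := fun ω hω =>
    norm_eq_one_of_mem_nthRootsFinset hn0 hs1 hω
  simp only [hΩ]
  refine ⟨fun f _ hf => norm_sum_mul_eval_le_sum_norm _ (fun ω hω => (hunit ω hω).le) u hf, ?_⟩
  choose ε hε hεu using fun ω => exists_norm_eq_one_mul_eq_norm (u ω)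
  obtain ⟨f, hdeg, hbound, hval⟩ :=
    exists_natDegree_le_norm_eval_le_one_eval_eq hn0 hs1 ε fun ω _ => (hε ω).le
  obtain ⟨ω₀, hω₀⟩ : (nthRootsFinset n s).Nonempty := by
    rw [← card_pos, Complex.card_nthRootsFinset hn0 (norm_ne_zero_iff.mp (hs1.trans_ne one_ne_zero))]
    exact hn
  refine ⟨f, hdeg, hbound, ⟨ω₀, (hunit ω₀ hω₀).le, by rw [hval ω₀ hω₀, hε]⟩, ?_⟩
  rw [sum_congr rfl fun ω hω => by rw [hval ω hω, hεu], ← Complex.ofReal_sum, Complex.norm_real,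
    Real.norm_of_nonneg (sum_nonneg fun ω _ => norm_nonneg _)]

theorem stmt_16 (n d : ℕ) (hn : 1 ≤ n) (hd : 2 * n - 1 ≤ d)
    (s : ℂ) (hs : s = 1 ∨ s = -1) (u : ℂ → ℂ) :
    (∀ f : Polynomial ℂ, f.degree < d → (∀ z : ℂ, ‖z‖ ≤ 1 → ‖f.eval z‖ ≤ 1) →
      ‖∑ ω ∈ (Polynomial.X ^ n - Polynomial.C s : Polynomial ℂ).roots.toFinset,
          u ω * f.eval ω‖ ≤
      ∑ ω ∈ (Polynomial.X ^ n - Polynomial.C s : Polynomial ℂ).roots.toFinset, ‖u ω‖) ∧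
    ∃ f : Polynomial ℂ, f.natDegree ≤ 2 * n - 2 ∧
      (∀ z : ℂ, ‖z‖ ≤ 1 → ‖f.eval z‖ ≤ 1) ∧
      (∃ z : ℂ, ‖z‖ ≤ 1 ∧ ‖f.eval z‖ = 1) ∧
      ‖∑ ω ∈ (Polynomial.X ^ n - Polynomial.C s : Polynomial ℂ).roots.toFinset,
          u ω * f.eval ω‖ =
        ∑ ω ∈ (Polynomial.X ^ n - Polynomial.C s : Polynomial ℂ).roots.toFinset, ‖u ω‖ :=
  stmt_16_general n d hn s hs u
end

section
/- Let n, d be positive integers with d ≥ 2n - 1 and let t_0, …, t_{n-1} ∈ ℂ. Then for every polynomial f = ∑_{ν<d} a_ν X^ν of degree < d with |f(z)| ≤ 1 on the closed unit disk, |∑_{ν=0}^{d-1} t_{ν mod n} a_ν| ≤ (1/n) ∑_{ω^n=1} |∑_{ν=0}^{n-1} t_ν/ω^ν|, where the outer sum is over all n-th roots of unity ω. -/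
/-! Orthogonality of the `n`-th roots of unity, `∑_{ω^n=1} ω^(ν-μ) = n·[ν ≡ μ mod n]`, turns the
coefficient sum into a quadrature at the roots of unity:
`∑_ν t_{ν mod n} a_ν = (1/n) ∑_{ω^n=1} (∑_μ t_μ ω^(-μ)) f(ω)`.
The roots of unity lie on the unit circle, where `|f| ≤ 1`, so the triangle inequality gives the
bound. -/

open Polynomial Finset

theorem IsPrimitiveRoot.sum_nthRootsFinset_zpow {K : Type*} [Field K] {ζ : K} {n : ℕ}
    (hζ : IsPrimitiveRoot ζ n) (k : ℤ) :
    ∑ ω ∈ nthRootsFinset n (1 : K), ω ^ k = if (n : ℤ) ∣ k then (n : K) else 0 := by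
  rcases Nat.eq_zero_or_pos n with rfl | hn
  · simp
  have hroot : ∀ ω ∈ nthRootsFinset n (1 : K), ω ^ n = 1 := fun ω hω =>
    (Polynomial.mem_nthRootsFinset hn 1).1 hω
  split_ifs with hk
  · obtain ⟨m, rfl⟩ := hk
    calc ∑ ω ∈ nthRootsFinset n (1 : K), ω ^ ((n : ℤ) * m)
        = ∑ ω ∈ nthRootsFinset n (1 : K), 1 :=
          sum_congr rfl fun ω hω => by rw [zpow_mul, zpow_natCast, hroot ω hω, one_zpow]
      _ = n := by simp [hζ.card_nthRootsFinset]
  · -- `ω ↦ ζ * ω` permutes the roots of unity, so the sum `S` satisfies `S = ζ ^ k * S`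
    have hζ0 : ζ ≠ 0 := hζ.ne_zero hn.ne'
    have hmem : ∀ ω ∈ nthRootsFinset n (1 : K), ∀ c : K, c ^ n = 1 →
        c * ω ∈ nthRootsFinset n (1 : K) := fun ω hω c hc => by
      rw [Polynomial.mem_nthRootsFinset hn, mul_pow, hc, hroot ω hω, one_mul]
    have hinv : ζ⁻¹ ^ n = 1 := by rw [inv_pow, hζ.pow_eq_one, inv_one]
    have hperm : ∑ ω ∈ nthRootsFinset n (1 : K), ω ^ k
        = ∑ ω ∈ nthRootsFinset n (1 : K), (ζ * ω) ^ k :=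
      sum_nbij' (ζ⁻¹ * ·) (ζ * ·) (fun ω hω => hmem ω hω _ hinv)
        (fun ω hω => hmem ω hω _ hζ.pow_eq_one) (fun ω _ => by simp [hζ0])
        (fun ω _ => by simp [hζ0]) (fun ω _ => by simp [hζ0])
    simp_rw [mul_zpow] at hperm
    rw [← mul_sum] at hperm
    have hζk : ζ ^ k ≠ 1 := mt (hζ.zpow_eq_one_iff_dvd k).1 hk
    have h : (1 - ζ ^ k) * ∑ ω ∈ nthRootsFinset n (1 : K), ω ^ k = 0 := by
      rw [one_sub_mul, ← hperm, sub_self]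
    exact (mul_eq_zero.1 h).resolve_left (sub_ne_zero.2 hζk.symm)

theorem Nat.intCast_dvd_sub_iff_eq_mod {n μ ν : ℕ} (hμ : μ < n) :
    (n : ℤ) ∣ (ν : ℤ) - μ ↔ μ = ν % n := by
  rw [← Nat.modEq_iff_dvd, Nat.ModEq, Nat.mod_eq_of_lt hμ]

theorem IsPrimitiveRoot.mul_sum_mod_eq_sum_nthRootsFinset {K : Type*} [Field K] {ζ : K} {n : ℕ}
    (hζ : IsPrimitiveRoot ζ n) (t c : ℕ → K) (d : ℕ) :
    (n : K) * ∑ ν ∈ range d, t (ν % n) * c ν =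
      ∑ ω ∈ nthRootsFinset n (1 : K),
        (∑ μ ∈ range n, t μ / ω ^ μ) * ∑ ν ∈ range d, c ν * ω ^ ν := by
  rcases Nat.eq_zero_or_pos n with rfl | hn
  · simp
  symm
  calc ∑ ω ∈ nthRootsFinset n (1 : K), (∑ μ ∈ range n, t μ / ω ^ μ) * ∑ ν ∈ range d, c ν * ω ^ ν
      = ∑ ω ∈ nthRootsFinset n (1 : K), ∑ ν ∈ range d, ∑ μ ∈ range n,
          t μ * c ν * ω ^ ((ν : ℤ) - μ) := by
        refine sum_congr rfl fun ω hω => ?_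
        have hω0 : ω ≠ 0 := ne_zero_of_mem_nthRootsFinset one_ne_zero hω
        rw [sum_mul_sum, sum_comm]
        refine sum_congr rfl fun ν _ => sum_congr rfl fun μ _ => ?_
        rw [zpow_sub₀ hω0, zpow_natCast, zpow_natCast]
        ring
    _ = ∑ ν ∈ range d, ∑ μ ∈ range n,
          t μ * c ν * ∑ ω ∈ nthRootsFinset n (1 : K), ω ^ ((ν : ℤ) - μ) := by
        rw [sum_comm]
        refine sum_congr rfl fun ν _ => ?_
        rw [sum_comm]
        simp_rw [mul_sum]
    _ = ∑ ν ∈ range d, n * (t (ν % n) * c ν) := by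
        refine sum_congr rfl fun ν _ => ?_
        simp_rw [hζ.sum_nthRootsFinset_zpow, mul_ite, mul_zero]
        rw [sum_congr rfl fun μ hμ =>
            if_congr (Nat.intCast_dvd_sub_iff_eq_mod (mem_range.1 hμ)) rfl rfl,
          sum_ite_eq' (range n) (ν % n), if_pos (mem_range.2 (Nat.mod_lt ν hn)), mul_comm]
    _ = n * ∑ ν ∈ range d, t (ν % n) * c ν := (mul_sum ..).symm

theorem Polynomial.eval_eq_sum_range_of_degree_lt {R : Type*} [Semiring R] {p : R[X]} {d : ℕ}
    (h : p.degree < d) (x : R) : p.eval x = ∑ ν ∈ range d, p.coeff ν * x ^ ν := by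
  rcases eq_or_ne p 0 with rfl | hp
  · simp
  exact eval_eq_sum_range' ((natDegree_lt_iff_degree_lt hp).2 h) x

theorem stmt_17_general (n d : ℕ) (hn : 1 ≤ n) (t : ℕ → ℂ)
    (f : Polynomial ℂ) (hdeg : f.degree < d)
    (hb : ∀ z : ℂ, ‖z‖ ≤ 1 → ‖f.eval z‖ ≤ 1) :
    ‖∑ ν ∈ Finset.range d, t (ν % n) * f.coeff ν‖ ≤
      (1 / (n : ℝ)) *
        ∑ ω ∈ (Polynomial.X ^ n - 1 : Polynomial ℂ).roots.toFinset,
          ‖∑ ν ∈ Finset.range n, t ν / ω ^ ν‖ := by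
  have hn0 : n ≠ 0 := by omega
  have hζ := Complex.isPrimitiveRoot_exp n hn0
  have hroots : (X ^ n - 1 : ℂ[X]).roots.toFinset = nthRootsFinset n (1 : ℂ) := by
    classical rw [nthRootsFinset_def, nthRoots, C_1]
  have hfilter := hζ.mul_sum_mod_eq_sum_nthRootsFinset t f.coeff d
  simp_rw [← eval_eq_sum_range_of_degree_lt hdeg] at hfilter
  have hroot_bound : ∀ ω ∈ nthRootsFinset n (1 : ℂ), ‖f.eval ω‖ ≤ 1 := fun ω hω =>
    hb ω (Complex.norm_eq_one_of_pow_eq_one ((mem_nthRootsFinset (by omega) 1).1 hω) hn0).le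
  rw [hroots, one_div_mul_eq_div, le_div_iff₀' (by positivity), ← Complex.norm_natCast,
    ← norm_mul, hfilter]
  refine (norm_sum_le _ _).trans (sum_le_sum fun ω hω => ?_)
  rw [norm_mul]
  exact mul_le_of_le_one_right (norm_nonneg _) (hroot_bound ω hω)

theorem stmt_17 (n d : ℕ) (hn : 1 ≤ n) (hd : 2 * n - 1 ≤ d) (t : ℕ → ℂ)
    (f : Polynomial ℂ) (hdeg : f.degree < d)
    (hb : ∀ z : ℂ, ‖z‖ ≤ 1 → ‖f.eval z‖ ≤ 1) :
    ‖∑ ν ∈ Finset.range d, t (ν % n) * f.coeff ν‖ ≤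
      (1 / (n : ℝ)) *
        ∑ ω ∈ (Polynomial.X ^ n - 1 : Polynomial ℂ).roots.toFinset,
          ‖∑ ν ∈ Finset.range n, t ν / ω ^ ν‖ :=
  stmt_17_general n d hn t f hdeg hb
end

section
/- Let 0 ≤ k < n be integers. Then for every polynomial f ∈ ℂ[X] of degree < 2n + k, |f^{(k)}(0)/k!| + |f^{(n+k)}(0)/(n+k)!| ≤ sup_{|z| ≤ 1} |f(z)|. In other words, the sum of the absolute values of the k-th and (n+k)-th Taylor coefficients of f at 0 is at most the sup-norm of f on the unit disk. -/
/-!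
Write `a = f.coeff k` and `b = f.coeff (n + k)`. A unimodular `w` can be chosen so that
`‖a + b * w‖ = ‖a‖ + ‖b‖`, so it suffices to bound `‖a + b * w‖` for every `‖w‖ = 1`. Take `ζ` with
`ζ ^ n = w` and average `g = X ^ (n - k) * f` over the `n` points `ζ * ω ^ j` of the unit circle,
`ω` a primitive `n`-th root of unity. The average keeps only the coefficients of `g` of index
divisible by `n`; as `deg g < 3 * n` these are the coefficients at `0`, `n`, `2 * n`, namely
`0`, `a`, `b`. Hence the average is `w * (a + b * w)`, of modulus at most `M`.
-/

open Polynomial Finset Complex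

theorem Polynomial.eval_zero_iterate_derivative_div_factorial {K : Type*} [Field K] [CharZero K]
    (f : K[X]) (k : ℕ) : (derivative^[k] f).eval 0 / (k.factorial : K) = f.coeff k := by
  rw [← coeff_zero_eq_eval_zero, coeff_iterate_derivative, zero_add, Nat.descFactorial_self,
    nsmul_eq_mul, mul_div_cancel_left₀ _ (Nat.cast_ne_zero.mpr k.factorial_ne_zero)]

namespace IsPrimitiveRoot

variable {R : Type*} [CommRing R] [IsDomain R] {ω : R} {n : ℕ}

theorem geom_sum_pow_eq_ite (hω : IsPrimitiveRoot ω n) (i : ℕ) :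
    ∑ j ∈ range n, (ω ^ i) ^ j = if n ∣ i then (n : R) else 0 := by
  split_ifs with hdvd
  · simp [(hω.pow_eq_one_iff_dvd i).mpr hdvd]
  · have hne : ω ^ i - 1 ≠ 0 := sub_ne_zero.mpr fun h ↦ hdvd ((hω.pow_eq_one_iff_dvd i).mp h)
    refine (mul_eq_zero.mp ?_).resolve_left hne
    rw [mul_geom_sum, ← pow_mul, mul_comm, pow_mul, hω.pow_eq_one, one_pow, sub_self]

theorem sum_eval_mul_pow (hω : IsPrimitiveRoot ω n) {g : R[X]} {m : ℕ}
    (hg : g.natDegree < n * m) (ζ : R) :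
    ∑ j ∈ range n, g.eval (ζ * ω ^ j) = n * ∑ q ∈ range m, g.coeff (n * q) * ζ ^ (n * q) := by
  have hn : 0 < n := Nat.pos_of_mul_pos_right (Nat.zero_lt_of_lt hg)
  calc ∑ j ∈ range n, g.eval (ζ * ω ^ j)
      = ∑ i ∈ range (n * m), g.coeff i * ζ ^ i * ∑ j ∈ range n, (ω ^ i) ^ j := by
        simp only [eval_eq_sum_range' hg, mul_sum]
        rw [sum_comm]
        refine sum_congr rfl fun i _ ↦ sum_congr rfl fun j _ ↦ ?_
        ring
    _ = n * ∑ i ∈ range (n * m) with n ∣ i, g.coeff i * ζ ^ i := by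
        simp only [geom_sum_pow_eq_ite hω, mul_ite, mul_zero, ← sum_filter, mul_sum]
        exact sum_congr rfl fun _ _ ↦ mul_comm _ _
    _ = n * ∑ q ∈ range m, g.coeff (n * q) * ζ ^ (n * q) := by
        congr 1
        refine sum_nbij' (· / n) (n * ·) ?_ ?_ ?_ ?_ ?_ <;>
          simp only [mem_filter, mem_range, and_imp]
        · intro i hi _; exact Nat.div_lt_of_lt_mul hi
        · intro q hq; exact ⟨Nat.mul_lt_mul_of_pos_left hq hn, dvd_mul_right n q⟩
        · intro i _ hdvd; exact Nat.mul_div_cancel' hdvd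
        · intro q _; exact Nat.mul_div_cancel_left q hn
        · intro i _ hdvd; rw [Nat.mul_div_cancel' hdvd]

theorem sum_eval_X_pow_mul (hω : IsPrimitiveRoot ω n) {k : ℕ} (hkn : k < n) {f : R[X]}
    (hf : f.natDegree < 2 * n + k) (ζ : R) :
    ∑ j ∈ range n, (X ^ (n - k) * f).eval (ζ * ω ^ j) =
      n * ζ ^ n * (f.coeff k + f.coeff (n + k) * ζ ^ n) := by
  have hdeg : (X ^ (n - k) * f).natDegree < n * 3 := by
    have := natDegree_X_pow_le (R := R) (n - k)
    have := natDegree_mul_le (p := X ^ (n - k)) (q := f)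
    omega
  rw [hω.sum_eval_mul_pow hdeg]
  simp only [sum_range_succ, range_zero, sum_empty, coeff_X_pow_mul']
  rw [if_neg (by omega), if_pos (by omega), if_pos (by omega),
    show n * 1 - (n - k) = k by omega, show n * 2 - (n - k) = n + k by omega]
  ring

end IsPrimitiveRoot

theorem Complex.exists_norm_eq_one_norm_add_mul_eq (a b : ℂ) :
    ∃ w : ℂ, ‖w‖ = 1 ∧ ‖a + b * w‖ = ‖a‖ + ‖b‖ := by
  refine ⟨exp ((arg a - arg b : ℝ) * I), norm_exp_ofReal_mul_I _, ?_⟩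
  have hsum : a + b * exp ((arg a - arg b : ℝ) * I) = (‖a‖ + ‖b‖ : ℝ) * exp (arg a * I) := by
    nth_rw 1 [← norm_mul_exp_arg_mul_I a, ← norm_mul_exp_arg_mul_I b]
    rw [mul_assoc, ← exp_add, ofReal_sub, ← add_mul, add_sub_cancel, ofReal_add, add_mul]
  rw [hsum, norm_mul, norm_exp_ofReal_mul_I, mul_one, norm_real,
    Real.norm_of_nonneg (by positivity)]

theorem Polynomial.norm_coeff_add_coeff_mul_le {k n : ℕ} (hkn : k < n) {f : ℂ[X]}
    (hf : f.natDegree < 2 * n + k) {M : ℝ} (hM : ∀ z : ℂ, ‖z‖ ≤ 1 → ‖f.eval z‖ ≤ M)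
    {w : ℂ} (hw : ‖w‖ = 1) :
    ‖f.coeff k + f.coeff (n + k) * w‖ ≤ M := by
  have hn : n ≠ 0 := by omega
  obtain ⟨ζ, rfl⟩ := IsAlgClosed.exists_pow_nat_eq w (Nat.pos_of_ne_zero hn)
  have hζ : ‖ζ‖ = 1 := by rwa [norm_pow, pow_eq_one_iff_of_nonneg (norm_nonneg ζ) hn] at hw
  have hω := isPrimitiveRoot_exp n hn
  have hz : ∀ j : ℕ, ‖ζ * exp (2 * Real.pi * I / n) ^ j‖ = 1 := fun j ↦ by
    rw [norm_mul, norm_pow, hζ, hω.norm'_eq_one hn, one_pow, one_mul]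
  have hsum := hω.sum_eval_X_pow_mul hkn hf ζ
  suffices n * ‖f.coeff k + f.coeff (n + k) * ζ ^ n‖ ≤ n * M from
    le_of_mul_le_mul_left this (by positivity)
  calc n * ‖f.coeff k + f.coeff (n + k) * ζ ^ n‖
      = ‖∑ j ∈ range n, (X ^ (n - k) * f).eval (ζ * exp (2 * Real.pi * I / n) ^ j)‖ := by
        rw [hsum, norm_mul, norm_mul, hw, mul_one, Complex.norm_natCast]
    _ ≤ ∑ j ∈ range n, M := by
        refine norm_sum_le_of_le _ fun j _ ↦ ?_
        rw [eval_mul, eval_pow, eval_X, norm_mul, norm_pow, hz, one_pow, one_mul]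
        exact hM _ (hz j).le
    _ = n * M := by rw [sum_const, card_range, nsmul_eq_mul]

theorem stmt_18 (k n : ℕ) (hkn : k < n) (f : Polynomial ℂ)
    (hdeg : f.degree < 2 * n + k)
    (M : ℝ) (hM : ∀ z : ℂ, ‖z‖ ≤ 1 → ‖f.eval z‖ ≤ M) :
    ‖Polynomial.eval 0 (Polynomial.derivative^[k] f) / (Nat.factorial k : ℂ)‖ +
      ‖Polynomial.eval 0 (Polynomial.derivative^[n + k] f) / (Nat.factorial (n + k) : ℂ)‖ ≤
      M := by
  have hf : f.natDegree < 2 * n + k := by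
    rcases eq_or_ne f 0 with rfl | hf0
    · rw [natDegree_zero]; omega
    · exact (natDegree_lt_iff_degree_lt hf0).mpr hdeg
  obtain ⟨w, hw, hnorm⟩ := exists_norm_eq_one_norm_add_mul_eq (f.coeff k) (f.coeff (n + k))
  rw [Polynomial.eval_zero_iterate_derivative_div_factorial,
    Polynomial.eval_zero_iterate_derivative_div_factorial, ← hnorm]
  exact norm_coeff_add_coeff_mul_le hkn hf hM hw
end
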